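/- arXiv:1902.00179 — 3 statements merged into one kernel-verified Lean document; each statement's English description precedes it below -/
import Mathlib

section
/- Let 0 ≤ β₂ < 1, ε > 0, ε₁ ≥ 0, N ≥ 0, and let g ∈ ℝ. Let v̂_t, v̂_{t−1} ≥ 0 be real numbers satisfying v̂_t ≥ (1−β₂) g² and |v̂_t − β₂ v̂_{t−1}| ≤ (1−β₂)(g² + ε₁ N). Then |g| · | 1/(√(v̂_t) + ε) − 1/(√(β₂ v̂_{t−1}) + ε) | ≤ √(1−β₂) (g² + ε₁ N) / ( (√(β₂ v̂_{t−1}) + ε) · ε ). -/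
/-!
Write `a = √v̂_t`, `b = √(β₂ v̂_{t-1})` and `s = √(1 - β₂)`. The difference of the two reciprocals is
`(b - a) / ((a + ε)(b + ε))`, and `|b - a| (a + b) ≤ |v̂_t - β₂ v̂_{t-1}| ≤ s² (g² + ε₁ N)`.
The lower bound on `v̂_t` gives `|g| s ≤ a ≤ a + b`, so the factor `|g|` absorbs `a + b` at the cost
of one factor `s`: `|g| |b - a| ≤ s (g² + ε₁ N)`. Finally `(a + ε)(b + ε) ≥ ε (b + ε)`.
-/

namespace Real

theorem abs_sqrt_sub_sqrt_mul_add_le (x y : ℝ) : |√x - √y| * (√x + √y) ≤ |x - y| := by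
  calc |√x - √y| * (√x + √y) = |√x ^ 2 - √y ^ 2| := by
        rw [← abs_of_nonneg (by positivity : 0 ≤ √x + √y), ← abs_mul]
        congr 1
        ring
    _ = |max x 0 - max y 0| := by rw [sq_sqrt', sq_sqrt']
    _ ≤ |x - y| := abs_max_sub_max_le_abs x y 0

theorem sqrt_mul_abs_le_sqrt {c x y : ℝ} (h : c * x ^ 2 ≤ y) : |x| * √c ≤ √y := by
  rw [mul_comm, ← sqrt_sq_eq_abs, ← sqrt_mul' c (sq_nonneg x)]
  exact sqrt_le_sqrt h

end Real

theorem mul_abs_sub_le_of_mul_le {a b c s M : ℝ} (ha : 0 ≤ a) (hb : 0 ≤ b) (hc : 0 ≤ c)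
    (hs : 0 ≤ s) (hM : 0 ≤ M) (hca : c * s ≤ a) (hd : |b - a| * (a + b) ≤ s ^ 2 * M) :
    c * |b - a| ≤ s * M := by
  rcases (add_nonneg ha hb).eq_or_lt with hab | hab
  · obtain rfl : a = 0 := by linarith
    obtain rfl : b = 0 := by linarith
    simpa using mul_nonneg hs hM
  · refine le_of_mul_le_mul_right ?_ hab
    calc c * |b - a| * (a + b) ≤ c * (s ^ 2 * M) := by
          rw [mul_assoc]; exact mul_le_mul_of_nonneg_left hd hc
      _ = c * s * (s * M) := by ring
      _ ≤ (a + b) * (s * M) := by gcongr; linarith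
      _ = s * M * (a + b) := mul_comm _ _

theorem mul_abs_one_div_add_sub_one_div_add_le {a b c ε K : ℝ} (ha : 0 ≤ a) (hb : 0 ≤ b)
    (hc : 0 ≤ c) (hε : 0 < ε) (h : c * |b - a| ≤ K) :
    c * |1 / (a + ε) - 1 / (b + ε)| ≤ K / ((b + ε) * ε) := by
  have hK : 0 ≤ K := (by positivity : 0 ≤ c * |b - a|).trans h
  rw [one_div, one_div, inv_sub_inv (by positivity) (by positivity), abs_div,
    abs_of_pos (by positivity : 0 < (a + ε) * (b + ε)), add_sub_add_right_eq_sub,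
    ← mul_div_assoc]
  exact div_le_div₀ hK h (by positivity) (by nlinarith)

theorem countMinSketch_T1_bound_general (β₂ ε ε₁ N g vt vprev : ℝ)
    (hβ₂1 : β₂ < 1) (hε : 0 < ε)
    (hvtg : (1 - β₂) * g ^ 2 ≤ vt)
    (hdiff : |vt - β₂ * vprev| ≤ (1 - β₂) * (g ^ 2 + ε₁ * N)) :
    |g| * |1 / (Real.sqrt vt + ε) - 1 / (Real.sqrt (β₂ * vprev) + ε)| ≤
      Real.sqrt (1 - β₂) * (g ^ 2 + ε₁ * N) / ((Real.sqrt (β₂ * vprev) + ε) * ε) := by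
  have hβ : 0 < 1 - β₂ := sub_pos.mpr hβ₂1
  have hs2 : Real.sqrt (1 - β₂) ^ 2 = 1 - β₂ := Real.sq_sqrt hβ.le
  have hM : 0 ≤ g ^ 2 + ε₁ * N := nonneg_of_mul_nonneg_right ((abs_nonneg _).trans hdiff) hβ
  have hroots : |Real.sqrt (β₂ * vprev) - Real.sqrt vt| *
      (Real.sqrt vt + Real.sqrt (β₂ * vprev)) ≤ Real.sqrt (1 - β₂) ^ 2 * (g ^ 2 + ε₁ * N) := by
    rw [abs_sub_comm, hs2]
    exact (Real.abs_sqrt_sub_sqrt_mul_add_le _ _).trans hdiff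
  refine mul_abs_one_div_add_sub_one_div_add_le (Real.sqrt_nonneg _) (Real.sqrt_nonneg _)
    (abs_nonneg g) hε ?_
  exact mul_abs_sub_le_of_mul_le (Real.sqrt_nonneg _) (Real.sqrt_nonneg _) (abs_nonneg g)
    (Real.sqrt_nonneg _) hM (Real.sqrt_mul_abs_le_sqrt hvtg) hroots

/-- Bound on the term T₁ in the proof of the main theorem: the difference between
the stochastic gradient coordinate divided by the current and previous sketched
adaptive denominators. -/
theorem countMinSketch_T1_bound (β₂ ε ε₁ N g vt vprev : ℝ)
    (hβ₂0 : 0 ≤ β₂) (hβ₂1 : β₂ < 1) (hε : 0 < ε) (hε₁ : 0 ≤ ε₁) (hN : 0 ≤ N)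
    (hvt0 : 0 ≤ vt) (hvprev0 : 0 ≤ vprev)
    (hvtg : (1 - β₂) * g ^ 2 ≤ vt)
    (hdiff : |vt - β₂ * vprev| ≤ (1 - β₂) * (g ^ 2 + ε₁ * N)) :
    |g| * |1 / (Real.sqrt vt + ε) - 1 / (Real.sqrt (β₂ * vprev) + ε)| ≤
      Real.sqrt (1 - β₂) * (g ^ 2 + ε₁ * N) / ((Real.sqrt (β₂ * vprev) + ε) * ε) :=
  countMinSketch_T1_bound_general β₂ ε ε₁ N g vt vprev hβ₂1 hε hvtg hdiff
end

section
/- Let x ∈ ℝ^d, let w ≥ 1, and let h : {1,…,d} → {1,…,w} and s : {1,…,d} → {−1, +1} be random functions such that the 2d values h(1),…,h(d), s(1),…,s(d) are mutually independent, each h(k) uniform on {1,…,w} and each s(k) uniform on {−1,+1}. Define est(i) = s(i) · Σ_{k : h(k) = h(i)} s(k) x_k. Then E[(est(i) − x_i)²] = (1/w) Σ_{k ≠ i} x_k² ≤ ‖x‖₂² / w, where ‖x‖₂² = Σ_k x_k². -/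
open MeasureTheory ProbabilityTheory Finset

/-- The family consisting of the `d` hash values followed by the `d` sign values,
indexed by `Fin d ⊕ Fin d`. -/
def hashSignFamily {Ω : Type*} {d w : ℕ} (H : Fin d → Ω → Fin w) (s : Fin d → Ω → ℝ) :
    (i : Fin d ⊕ Fin d) → Ω → Sum.elim (fun _ : Fin d => Fin w) (fun _ : Fin d => ℝ) i
  | Sum.inl k => H k
  | Sum.inr k => s k

/-- The measurable-space structure on the codomains of `hashSignFamily`. -/
def hashSignMS {d w : ℕ} :
    (i : Fin d ⊕ Fin d) →
      MeasurableSpace (Sum.elim (fun _ : Fin d => Fin w) (fun _ : Fin d => ℝ) i)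
  | Sum.inl _ => (inferInstance : MeasurableSpace (Fin w))
  | Sum.inr _ => (inferInstance : MeasurableSpace ℝ)

/-! The error `est i - x i` is `∑_{k ≠ i} c_k s_k` with `c_k = 1[h(k) = h(i)] s(i) x_k`, and `c_k`
is a function of the hashes and of the signs other than `s(k)`. Hence for `k ≠ l` the cross term
`c_k s_k c_l s_l` contains the independent mean-zero factor `s_k` and integrates to zero, while
`(c_k s_k)² = 1[h(k) = h(i)] x_k²` has mean `x_k² / w`, since two independent hashes, one of them
uniform, collide with probability `1 / w`. -/

namespace MeasureTheory

variable {Ω : Type*} {mΩ : MeasurableSpace Ω} {μ : Measure Ω}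

lemma integral_sq_sum_of_orthogonal {κ : Type*} {E : Finset κ} {a : κ → Ω → ℝ}
    (hint : ∀ k ∈ E, ∀ l ∈ E, Integrable (fun ω => a k ω * a l ω) μ)
    (horth : ∀ k ∈ E, ∀ l ∈ E, k ≠ l → ∫ ω, a k ω * a l ω ∂μ = 0) :
    ∫ ω, (∑ k ∈ E, a k ω) ^ 2 ∂μ = ∑ k ∈ E, ∫ ω, a k ω ^ 2 ∂μ := by
  calc ∫ ω, (∑ k ∈ E, a k ω) ^ 2 ∂μ = ∫ ω, ∑ k ∈ E, ∑ l ∈ E, a k ω * a l ω ∂μ := by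
        simp_rw [sq, sum_mul_sum]
    _ = ∑ k ∈ E, ∑ l ∈ E, ∫ ω, a k ω * a l ω ∂μ := by
        rw [integral_finsetSum _ fun k hk => integrable_finsetSum _ fun l hl => hint k hk l hl]
        exact sum_congr rfl fun k hk => integral_finsetSum _ fun l hl => hint k hk l hl
    _ = ∑ k ∈ E, ∫ ω, a k ω ^ 2 ∂μ := sum_congr rfl fun k hk => by
        rw [sum_eq_single_of_mem k hk fun l hl hlk => horth k hk l hl (Ne.symm hlk)]
        simp_rw [sq]

end MeasureTheory

namespace ProbabilityTheory

variable {Ω : Type*} {mΩ : MeasurableSpace Ω} {μ : Measure Ω}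

lemma integral_eq_zero_of_eq_one_or_eq_neg_one [IsProbabilityMeasure μ] {s : Ω → ℝ}
    (hs : Measurable s) (hval : ∀ ω, s ω = 1 ∨ s ω = -1) (hhalf : μ {ω | s ω = 1} = 2⁻¹) :
    ∫ ω, s ω ∂μ = 0 := by
  have hset : MeasurableSet {ω | s ω = 1} := hs (measurableSet_singleton 1)
  have hs_eq : ∀ ω, s ω = {ω | s ω = 1}.indicator (fun _ => (2 : ℝ)) ω - 1 := by
    intro ω
    rcases hval ω with h | h <;> simp [Set.indicator_apply, h] <;> norm_num
  have hhalf' : μ.real {ω | s ω = 1} = 2⁻¹ := by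
    rw [measureReal_def, hhalf, ENNReal.toReal_inv]; simp
  rw [integral_congr_ae (ae_of_all _ hs_eq),
    integral_sub ((integrable_const _).indicator hset) (integrable_const _),
    integral_indicator_const _ hset, hhalf', integral_const]
  norm_num

lemma IndepFun.measure_eq_eq_of_forall_measure_eq {α : Type*} [Fintype α] [MeasurableSpace α]
    [MeasurableSingletonClass α] [IsProbabilityMeasure μ] {X Y : Ω → α} (hXY : IndepFun X Y μ)
    (hX : Measurable X) (hY : Measurable Y) {p : ENNReal} (hunif : ∀ a, μ {ω | X ω = a} = p) :
    μ {ω | X ω = Y ω} = p := by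
  have hfib : {ω | X ω = Y ω} = ⋃ a ∈ (univ : Finset α), X ⁻¹' {a} ∩ Y ⁻¹' {a} := by
    ext ω; simp [eq_comm]
  have hdisj : (↑(univ : Finset α) : Set α).PairwiseDisjoint fun a => X ⁻¹' {a} ∩ Y ⁻¹' {a} :=
    fun a _ b _ hab => Set.disjoint_left.2 fun ω ha hb => hab (ha.1.symm.trans hb.1)
  rw [hfib, measure_biUnion_finset hdisj fun a _ =>
    (hX (measurableSet_singleton a)).inter (hY (measurableSet_singleton a))]
  calc ∑ a, μ (X ⁻¹' {a} ∩ Y ⁻¹' {a})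
      = ∑ a, p * μ (Y ⁻¹' {a}) := by
        refine sum_congr rfl fun a _ => ?_
        rw [hXY.measure_inter_preimage_eq_mul _ _ (measurableSet_singleton a)
          (measurableSet_singleton a)]
        exact congrArg (· * _) (hunif a)
    _ = p := by
        rw [← mul_sum, sum_measure_preimage_singleton _ fun a _ => hY (measurableSet_singleton a)]
        simp

variable {ι : Type*} {β : ι → Type*} {m : ∀ i, MeasurableSpace (β i)} {f : ∀ i, Ω → β i}

lemma measurable_biSup_comap_of_mem {S : Set ι} {i : ι} (hi : i ∈ S) :
    Measurable[⨆ j ∈ S, (m j).comap (f j)] (f i) :=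
  (comap_measurable (f i)).mono (le_iSup₂ (f := fun j (_ : j ∈ S) => (m j).comap (f j)) i hi)
    le_rfl

lemma iIndepFun.integral_mul_eq_zero (hf : iIndepFun f μ) (hmeas : ∀ i, Measurable (f i))
    {j : ι} {Y Z : Ω → ℝ} (hY : Measurable[⨆ i ∈ ({j}ᶜ : Set ι), (m i).comap (f i)] Y)
    (hZ : Measurable[(m j).comap (f j)] Z) (hZ0 : ∫ ω, Z ω ∂μ = 0) :
    ∫ ω, Y ω * Z ω ∂μ = 0 := by
  have hle : ∀ i, (m i).comap (f i) ≤ mΩ := fun i => (hmeas i).comap_le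
  have hind := indep_iSup_of_disjoint hle hf.iIndep (disjoint_compl_left (a := ({j} : Set ι)))
  have hYZ : IndepFun Y Z μ := by
    rw [IndepFun_iff_Indep]
    refine indep_of_indep_of_le_left (indep_of_indep_of_le_right hind ?_) hY.comap_le
    exact hZ.comap_le.trans (le_iSup₂ (f := fun i (_ : i ∈ ({j} : Set ι)) => (m i).comap (f i))
      j rfl)
  rw [hYZ.integral_fun_mul_eq_mul_integral
    (hY.mono (iSup₂_le fun i _ => hle i) le_rfl).aestronglyMeasurable
    (hZ.mono (hle j) le_rfl).aestronglyMeasurable, hZ0, mul_zero]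

end ProbabilityTheory

section CountSketch

variable {Ω : Type*} {mΩ : MeasurableSpace Ω} {P : Measure Ω} {d w : ℕ} {H : Fin d → Ω → Fin w}
  {s : Fin d → Ω → ℝ} {x : Fin d → ℝ}

def collisionCoeff (H : Fin d → Ω → Fin w) (s : Fin d → Ω → ℝ) (x : Fin d → ℝ) (i k : Fin d)
    (ω : Ω) : ℝ :=
  if H k ω = H i ω then s i ω * x k else 0

lemma sign_mul_sum_sub_eq_sum_collisionCoeff (hsval : ∀ k ω, s k ω = 1 ∨ s k ω = -1)
    (i : Fin d) (ω : Ω) :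
    s i ω * ∑ k ∈ univ.filter (fun k => H k ω = H i ω), s k ω * x k - x i =
      ∑ k ∈ univ.erase i, collisionCoeff H s x i k ω * s k ω := by
  have hsi : s i ω * s i ω = 1 := by rcases hsval i ω with h | h <;> rw [h] <;> norm_num
  rw [sum_filter, ← add_sum_erase _ _ (mem_univ i), if_pos rfl, mul_add, mul_sum,
    ← mul_assoc, hsi, one_mul, add_sub_cancel_left]
  refine sum_congr rfl fun k _ => ?_
  unfold collisionCoeff
  split_ifs <;> ring

lemma measurable_collisionCoeff {m : MeasurableSpace Ω} {i k : Fin d}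
    (hHk : Measurable[m] (H k)) (hHi : Measurable[m] (H i)) (hsi : Measurable[m] (s i)) :
    Measurable[m] (collisionCoeff H s x i k) :=
  Measurable.ite (measurableSet_eq_fun hHk hHi) (hsi.mul_const _) measurable_const

lemma abs_collisionCoeff_mul_sign_le (hsval : ∀ k ω, s k ω = 1 ∨ s k ω = -1) (i k : Fin d)
    (ω : Ω) : |collisionCoeff H s x i k ω * s k ω| ≤ |x k| := by
  unfold collisionCoeff
  split_ifs
  · rcases hsval i ω with hi | hi <;> rcases hsval k ω with hk | hk <;> simp [hi, hk]
  · simp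

lemma integrable_collisionCoeff_mul_sign_mul [IsFiniteMeasure P]
    (hHmeas : ∀ k, Measurable (H k)) (hsmeas : ∀ k, Measurable (s k))
    (hsval : ∀ k ω, s k ω = 1 ∨ s k ω = -1) (i k l : Fin d) :
    Integrable (fun ω => collisionCoeff H s x i k ω * s k ω * (collisionCoeff H s x i l ω * s l ω))
      P := by
  have hmeas : ∀ k, Measurable fun ω => collisionCoeff H s x i k ω * s k ω := fun k =>
    (measurable_collisionCoeff (hHmeas k) (hHmeas i) (hsmeas i)).mul (hsmeas k)
  refine Integrable.of_bound ((hmeas k).mul (hmeas l)).aestronglyMeasurable (|x k| * |x l|)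
    (ae_of_all _ fun ω => ?_)
  rw [Real.norm_eq_abs, abs_mul]
  exact mul_le_mul (abs_collisionCoeff_mul_sign_le hsval i k ω)
    (abs_collisionCoeff_mul_sign_le hsval i l ω) (abs_nonneg _) (abs_nonneg _)

lemma collisionCoeff_mul_sign_sq (hsval : ∀ k ω, s k ω = 1 ∨ s k ω = -1) (i k : Fin d)
    (ω : Ω) :
    (collisionCoeff H s x i k ω * s k ω) ^ 2 =
      {ω | H k ω = H i ω}.indicator (fun _ => x k ^ 2) ω := by
  unfold collisionCoeff
  by_cases h : H k ω = H i ω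
  · rw [if_pos h, Set.indicator_of_mem (show ω ∈ {ω | H k ω = H i ω} from h)]
    rcases hsval i ω with hi | hi <;> rcases hsval k ω with hk | hk <;> simp [hi, hk]
  · rw [if_neg h, Set.indicator_of_notMem (show ω ∉ {ω | H k ω = H i ω} from h)]
    ring

lemma integral_collisionCoeff_mul_sign_sq [IsProbabilityMeasure P]
    (hHmeas : ∀ k, Measurable (H k)) (hsval : ∀ k ω, s k ω = 1 ∨ s k ω = -1)
    (hindep : iIndepFun (m := hashSignMS) (hashSignFamily H s) P)
    (hHunif : ∀ k (c : Fin w), P {ω | H k ω = c} = (w : ENNReal)⁻¹) {i k : Fin d} (hki : k ≠ i) :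
    ∫ ω, (collisionCoeff H s x i k ω * s k ω) ^ 2 ∂P = x k ^ 2 / w := by
  have hHkHi : IndepFun (H k) (H i) P :=
    hindep.indepFun (i := Sum.inl k) (j := Sum.inl i) (by simpa using hki)
  have hcoll : P {ω | H k ω = H i ω} = (w : ENNReal)⁻¹ :=
    hHkHi.measure_eq_eq_of_forall_measure_eq (hHmeas k) (hHmeas i) (hHunif k)
  simp_rw [collisionCoeff_mul_sign_sq hsval]
  rw [integral_indicator_const _ (measurableSet_eq_fun (hHmeas k) (hHmeas i)), measureReal_def,
    hcoll, ENNReal.toReal_inv, ENNReal.toReal_natCast, smul_eq_mul, inv_mul_eq_div]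

lemma integral_collisionCoeff_mul_sign_mul_eq_zero [IsProbabilityMeasure P]
    (hHmeas : ∀ k, Measurable (H k)) (hsmeas : ∀ k, Measurable (s k))
    (hsval : ∀ k ω, s k ω = 1 ∨ s k ω = -1)
    (hindep : iIndepFun (m := hashSignMS) (hashSignFamily H s) P)
    (hsunif : ∀ k, P {ω | s k ω = 1} = (2 : ENNReal)⁻¹) {i k l : Fin d} (hki : k ≠ i)
    (hkl : k ≠ l) :
    ∫ ω, collisionCoeff H s x i k ω * s k ω * (collisionCoeff H s x i l ω * s l ω) ∂P = 0 := by
  have hfmeas : ∀ j, @Measurable Ω _ mΩ (hashSignMS j) (hashSignFamily H s j) := by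
    rintro (j | j)
    · exact hHmeas j
    · exact hsmeas j
  let m' := ⨆ j ∈ ({Sum.inr k}ᶜ : Set (Fin d ⊕ Fin d)),
    (hashSignMS j).comap (hashSignFamily H s j)
  have hrest : ∀ j ≠ Sum.inr k, @Measurable Ω _ m' (hashSignMS j) (hashSignFamily H s j) :=
    fun j hj => measurable_biSup_comap_of_mem hj
  have hHk : Measurable[m'] (H k) := hrest (Sum.inl k) (by simp)
  have hHi : Measurable[m'] (H i) := hrest (Sum.inl i) (by simp)
  have hHl : Measurable[m'] (H l) := hrest (Sum.inl l) (by simp)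
  have hsi : Measurable[m'] (s i) := hrest (Sum.inr i) (by simpa using hki.symm)
  have hsl : Measurable[m'] (s l) := hrest (Sum.inr l) (by simpa using hkl.symm)
  calc ∫ ω, collisionCoeff H s x i k ω * s k ω * (collisionCoeff H s x i l ω * s l ω) ∂P
      = ∫ ω, collisionCoeff H s x i k ω * (collisionCoeff H s x i l ω * s l ω) * s k ω ∂P := by
        congr 1; ext ω; ring
    _ = 0 := hindep.integral_mul_eq_zero (j := Sum.inr k) hfmeas
        (((measurable_collisionCoeff hHk hHi hsi).mul
          ((measurable_collisionCoeff hHl hHi hsi).mul hsl)))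
        (by exact comap_measurable _)
        (integral_eq_zero_of_eq_one_or_eq_neg_one (hsmeas k) (hsval k) (hsunif k))

end CountSketch

theorem countSketch_variance_general {d w : ℕ}
    {Ω : Type*} [MeasurableSpace Ω] (P : Measure Ω) [IsProbabilityMeasure P]
    (x : Fin d → ℝ)
    (H : Fin d → Ω → Fin w) (hHmeas : ∀ k, Measurable (H k))
    (s : Fin d → Ω → ℝ) (hsmeas : ∀ k, Measurable (s k))
    (hsval : ∀ k ω, s k ω = 1 ∨ s k ω = -1)
    (hindep : iIndepFun (m := hashSignMS) (hashSignFamily H s) P)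
    (hHunif : ∀ k (c : Fin w), P {ω | H k ω = c} = (w : ENNReal)⁻¹)
    (hsunif : ∀ k, P {ω | s k ω = 1} = (2 : ENNReal)⁻¹)
    (est : Fin d → Ω → ℝ)
    (hest : ∀ i ω, est i ω =
      s i ω * ∑ k ∈ Finset.univ.filter (fun k => H k ω = H i ω), s k ω * x k)
    (i : Fin d) :
    ∫ ω, (est i ω - x i) ^ 2 ∂P = (1 / w) * ∑ k ∈ Finset.univ.erase i, (x k) ^ 2 ∧
      (1 / w) * ∑ k ∈ Finset.univ.erase i, (x k) ^ 2 ≤ (∑ k, (x k) ^ 2) / w := by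
  have herr : ∀ ω, est i ω - x i = ∑ k ∈ univ.erase i, collisionCoeff H s x i k ω * s k ω :=
    fun ω => by rw [hest]; exact sign_mul_sum_sub_eq_sum_collisionCoeff hsval i ω
  have hvar : ∫ ω, (est i ω - x i) ^ 2 ∂P = (1 / w) * ∑ k ∈ univ.erase i, x k ^ 2 := by
    simp_rw [herr]
    rw [integral_sq_sum_of_orthogonal
      (fun k _ l _ => integrable_collisionCoeff_mul_sign_mul hHmeas hsmeas hsval i k l)
      (fun k hk l _ hkl => integral_collisionCoeff_mul_sign_mul_eq_zero hHmeas hsmeas hsval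
        hindep hsunif (ne_of_mem_erase hk) hkl), mul_sum]
    refine sum_congr rfl fun k hk => ?_
    rw [integral_collisionCoeff_mul_sign_sq hHmeas hsval hindep hHunif (ne_of_mem_erase hk)]
    ring
  refine ⟨hvar, ?_⟩
  rw [one_div_mul_eq_div]
  exact div_le_div_of_nonneg_right
    (sum_le_sum_of_subset_of_nonneg (erase_subset _ _) fun k _ _ => sq_nonneg (x k))
    (Nat.cast_nonneg w)

/-- The variance of the Count-Sketch row estimator of coordinate `i` equals the
squared ℓ₂ mass of the other coordinates divided by the width `w`. -/
theorem countSketch_variance {d w : ℕ} (hd : 0 < d) (hw : 0 < w)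
    {Ω : Type*} [MeasurableSpace Ω] (P : Measure Ω) [IsProbabilityMeasure P]
    (x : Fin d → ℝ)
    (H : Fin d → Ω → Fin w) (hHmeas : ∀ k, Measurable (H k))
    (s : Fin d → Ω → ℝ) (hsmeas : ∀ k, Measurable (s k))
    (hsval : ∀ k ω, s k ω = 1 ∨ s k ω = -1)
    (hindep : iIndepFun (m := hashSignMS) (hashSignFamily H s) P)
    (hHunif : ∀ k (c : Fin w), P {ω | H k ω = c} = (w : ENNReal)⁻¹)
    (hsunif : ∀ k, P {ω | s k ω = 1} = (2 : ENNReal)⁻¹)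
    (est : Fin d → Ω → ℝ)
    (hest : ∀ i ω, est i ω =
      s i ω * ∑ k ∈ Finset.univ.filter (fun k => H k ω = H i ω), s k ω * x k)
    (i : Fin d) :
    ∫ ω, (est i ω - x i) ^ 2 ∂P = (1 / w) * ∑ k ∈ Finset.univ.erase i, (x k) ^ 2 ∧
      (1 / w) * ∑ k ∈ Finset.univ.erase i, (x k) ^ 2 ≤ (∑ k, (x k) ^ 2) / w :=
  countSketch_variance_general P x H hHmeas s hsmeas hsval hindep hHunif hsunif est hest i
end

section
/- Let x ∈ ℝ^d with x ≠ 0, let w ≥ 1 and ε₁ > 0, and let h : {1,…,d} → {1,…,w} and s : {1,…,d} → {−1, +1} be random functions such that the 2d values h(1),…,h(d), s(1),…,s(d) are mutually independent, each h(k) uniform on {1,…,w} and each s(k) uniform on {−1,+1}. Define est(i) = s(i) · Σ_{k : h(k) = h(i)} s(k) x_k. Then for every coordinate i, P[ |est(i) − x_i| ≥ ε₁ ‖x‖₂ ] ≤ 1/(ε₁² w), where ‖x‖₂ = (Σ_k x_k²)^{1/2}. -/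
/-!
Write `N = ∑_{k ≠ i} [h(k) = h(i)] s(k) x_k` for the mass of the other coordinates hashed into the
bucket of `i`; since `s(i)² = 1`, `est(i) - x_i = s(i) N`. Expanding `E[N²]`, a cross term with
`k ≠ l` contains the factor `s(k)`, which is independent of all hashes and of `s(l)` and has mean
zero, so it vanishes; a diagonal term equals `x_k² P[h(k) = h(i)] = x_k² / w`. Hence
`E[N²] ≤ ‖x‖₂² / w`, and Markov's inequality for `N²` gives the bound.
-/

open MeasureTheory ProbabilityTheory Finset

open scoped ENNReal

section Probability

variable {Ω : Type*} [MeasurableSpace Ω] {P : Measure Ω}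

lemma integral_eq_zero_of_uniform_sign [IsProbabilityMeasure P] {σ : Ω → ℝ} (hσ : Measurable σ)
    (hval : ∀ ω, σ ω = 1 ∨ σ ω = -1) (hhalf : P {ω | σ ω = 1} = 2⁻¹) :
    ∫ ω, σ ω ∂P = 0 := by
  set A := {ω | σ ω = 1}
  have hA : MeasurableSet A := hσ (measurableSet_singleton 1)
  have hAc : P Aᶜ = 2⁻¹ := by rw [prob_compl_eq_one_sub hA, hhalf, ENNReal.one_sub_inv_two]
  have hσ_eq : ∀ ω, σ ω = A.indicator 1 ω - Aᶜ.indicator 1 ω := by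
    intro ω
    rcases hval ω with h | h <;> norm_num [A, Set.indicator_apply, h]
  rw [integral_congr_ae (.of_forall hσ_eq), integral_sub ((integrable_const 1).indicator hA)
    ((integrable_const 1).indicator hA.compl), integral_indicator_one hA,
    integral_indicator_one hA.compl, measureReal_def, measureReal_def, hhalf, hAc, sub_self]

lemma ProbabilityTheory.IndepFun.measure_eq_eq_inv_card [IsProbabilityMeasure P]
    {α : Type*} [Fintype α] [MeasurableSpace α] [MeasurableSingletonClass α] {X Y : Ω → α}
    (hXY : IndepFun X Y P) (hX : Measurable X) (hY : Measurable Y)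
    (hunif : ∀ c, P {ω | X ω = c} = (Fintype.card α : ℝ≥0∞)⁻¹) :
    P {ω | X ω = Y ω} = (Fintype.card α : ℝ≥0∞)⁻¹ := by
  have hdiag : {ω | X ω = Y ω} = ⋃ c, X ⁻¹' {c} ∩ Y ⁻¹' {c} := by
    ext ω; simp [eq_comm]
  have hdisj : Pairwise (Function.onFun Disjoint fun c => X ⁻¹' {c} ∩ Y ⁻¹' {c}) :=
    fun c c' hcc' => ((Set.disjoint_singleton.mpr hcc').preimage X).mono inf_le_left inf_le_left
  rw [hdiag, measure_iUnion hdisj fun c => (hX (measurableSet_singleton c)).inter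
    (hY (measurableSet_singleton c)), tsum_fintype]
  simp_rw [hXY.measure_inter_preimage_eq_mul _ _ (measurableSet_singleton _)
    (measurableSet_singleton _), show ∀ c, P (X ⁻¹' {c}) = _ from hunif, ← Finset.mul_sum,
    sum_measure_preimage_singleton _ fun c _ => hY (measurableSet_singleton c)]
  simp

lemma meas_abs_ge_le_integral_sq_div_sq [IsFiniteMeasure P] {Z : Ω → ℝ}
    (hZ : Integrable (fun ω => Z ω ^ 2) P) {t : ℝ} (ht : 0 < t) :
    P {ω | t ≤ |Z ω|} ≤ ENNReal.ofReal ((∫ ω, Z ω ^ 2 ∂P) / t ^ 2) := by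
  have hset : {ω | t ≤ |Z ω|} = {ω | t ^ 2 ≤ Z ω ^ 2} := by
    ext ω
    simp only [Set.mem_ofPred_eq, ← sq_abs (Z ω)]
    exact (pow_le_pow_iff_left₀ ht.le (abs_nonneg _) two_ne_zero).symm
  rw [hset, ← ofReal_measureReal]
  refine ENNReal.ofReal_le_ofReal ((le_div_iff₀ (by positivity)).mpr ?_)
  rw [mul_comm]
  exact mul_meas_ge_le_integral_of_nonneg (.of_forall fun ω => sq_nonneg _) hZ _

end Probability

section CountSketch

variable {Ω : Type*} {d w : ℕ}
  {H : Fin d → Ω → Fin w} {s : Fin d → Ω → ℝ} {x : Fin d → ℝ} {i k l : Fin d}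

def collisionTerm (H : Fin d → Ω → Fin w) (s : Fin d → Ω → ℝ) (x : Fin d → ℝ) (i k : Fin d)
    (ω : Ω) : ℝ :=
  if H k ω = H i ω then s k ω * x k else 0

def bucketNoise (H : Fin d → Ω → Fin w) (s : Fin d → Ω → ℝ) (x : Fin d → ℝ) (i : Fin d)
    (ω : Ω) : ℝ :=
  ∑ k ∈ univ.erase i, collisionTerm H s x i k ω

lemma sum_bucket_eq_add_bucketNoise (ω : Ω) :
    ∑ k ∈ univ.filter (fun k => H k ω = H i ω), s k ω * x k =
      s i ω * x i + bucketNoise H s x i ω := by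
  rw [sum_filter, ← add_sum_erase _ _ (mem_univ i), if_pos rfl]
  rfl

lemma bucketNoise_sq_eq (ω : Ω) :
    bucketNoise H s x i ω ^ 2 =
      ∑ k ∈ univ.erase i, ∑ l ∈ univ.erase i,
        collisionTerm H s x i k ω * collisionTerm H s x i l ω := by
  rw [sq, bucketNoise, sum_mul_sum]

lemma abs_sign_mul_add_sub {σ : ℝ} (hσ : σ = 1 ∨ σ = -1) (a z : ℝ) :
    |σ * (σ * a + z) - a| = |z| := by
  rcases hσ with rfl | rfl
  · ring_nf
  · ring_nf; simp

lemma abs_collisionTerm_le (hsval : ∀ k ω, s k ω = 1 ∨ s k ω = -1) (ω : Ω) :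
    |collisionTerm H s x i k ω| ≤ |x k| := by
  unfold collisionTerm
  split_ifs
  · rcases hsval k ω with h | h <;> simp [h]
  · simp

lemma collisionTerm_mul_self (hsval : ∀ k ω, s k ω = 1 ∨ s k ω = -1) (ω : Ω) :
    collisionTerm H s x i k ω * collisionTerm H s x i k ω =
      {ω | H k ω = H i ω}.indicator (fun _ => x k ^ 2) ω := by
  by_cases h : H k ω = H i ω
  · rw [Set.indicator_of_mem (show ω ∈ {ω | H k ω = H i ω} from h), collisionTerm, if_pos h]
    rcases hsval k ω with hs | hs <;> rw [hs] <;> ring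
  · rw [Set.indicator_of_notMem (show ω ∉ {ω | H k ω = H i ω} from h), collisionTerm,
      if_neg h, mul_zero]

variable [MeasurableSpace Ω] {P : Measure Ω}

lemma measurable_collisionTerm (hHmeas : ∀ k, Measurable (H k)) (hsmeas : ∀ k, Measurable (s k)) :
    Measurable (collisionTerm H s x i k) :=
  Measurable.ite (measurableSet_eq_fun (hHmeas k) (hHmeas i)) ((hsmeas k).mul_const _)
    measurable_const

lemma integrable_collisionTerm_mul [IsFiniteMeasure P] (hHmeas : ∀ k, Measurable (H k))
    (hsmeas : ∀ k, Measurable (s k)) (hsval : ∀ k ω, s k ω = 1 ∨ s k ω = -1) :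
    Integrable (fun ω => collisionTerm H s x i k ω * collisionTerm H s x i l ω) P :=
  .of_bound ((measurable_collisionTerm hHmeas hsmeas).mul
    (measurable_collisionTerm hHmeas hsmeas)).aestronglyMeasurable (|x k| * |x l|)
    (.of_forall fun ω => by
      rw [norm_mul]
      exact mul_le_mul (abs_collisionTerm_le hsval ω) (abs_collisionTerm_le hsval ω)
        (norm_nonneg _) (abs_nonneg _))

lemma integral_collisionTerm_mul_self [IsProbabilityMeasure P]
    (hindep : iIndepFun (m := hashSignMS) (hashSignFamily H s) P)
    (hHmeas : ∀ k, Measurable (H k)) (hsval : ∀ k ω, s k ω = 1 ∨ s k ω = -1)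
    (hHunif : ∀ k (c : Fin w), P {ω | H k ω = c} = (w : ℝ≥0∞)⁻¹) (hki : k ≠ i) :
    ∫ ω, collisionTerm H s x i k ω * collisionTerm H s x i k ω ∂P = x k ^ 2 / w := by
  have hind : IndepFun (H k) (H i) P := hindep.indepFun (Sum.inl_injective.ne hki)
  have hcoll : P {ω | H k ω = H i ω} = (w : ℝ≥0∞)⁻¹ := by
    simpa using hind.measure_eq_eq_inv_card (hHmeas k) (hHmeas i) (by simpa using hHunif k)
  rw [integral_congr_ae (.of_forall (collisionTerm_mul_self hsval)),
    integral_indicator_const _ (measurableSet_eq_fun (hHmeas k) (hHmeas i)), measureReal_def,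
    hcoll, ENNReal.toReal_inv, ENNReal.toReal_natCast, smul_eq_mul, div_eq_inv_mul]

lemma indepFun_sign_hashes_sign
    (hindep : iIndepFun (m := hashSignMS) (hashSignFamily H s) P)
    (hHmeas : ∀ k, Measurable (H k)) (hsmeas : ∀ k, Measurable (s k)) (hkl : k ≠ l) :
    IndepFun (s k) (fun ω => (fun m => H m ω, s l ω)) P := by
  let _ := hashSignMS (d := d) (w := w)
  have hfam : ∀ j, Measurable (hashSignFamily H s j) := by
    rintro (m | m)
    exacts [hHmeas m, hsmeas m]
  have hψ : Measurable fun (v : ∀ j : ({Sum.inr k}ᶜ : Finset (Fin d ⊕ Fin d)),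
      Sum.elim (fun _ : Fin d => Fin w) (fun _ : Fin d => ℝ) (j : Fin d ⊕ Fin d)) =>
      ((fun m => v ⟨Sum.inl m, by simp⟩ : Fin d → Fin w),
        (v ⟨Sum.inr l, by simp [hkl.symm]⟩ : ℝ)) := by
    fun_prop
  exact (hindep.indepFun_finset {Sum.inr k} {Sum.inr k}ᶜ disjoint_compl_right hfam).comp
    (measurable_pi_apply ⟨Sum.inr k, mem_singleton_self _⟩) hψ

lemma integral_collisionTerm_mul_of_ne [IsProbabilityMeasure P]
    (hindep : iIndepFun (m := hashSignMS) (hashSignFamily H s) P)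
    (hHmeas : ∀ k, Measurable (H k)) (hsmeas : ∀ k, Measurable (s k))
    (hsval : ∀ k ω, s k ω = 1 ∨ s k ω = -1) (hsunif : ∀ k, P {ω | s k ω = 1} = 2⁻¹)
    (hkl : k ≠ l) :
    ∫ ω, collisionTerm H s x i k ω * collisionTerm H s x i l ω ∂P = 0 := by
  set φ : (Fin d → Fin w) × ℝ → ℝ := fun p =>
    (if p.1 k = p.1 i then x k else 0) * (if p.1 l = p.1 i then p.2 * x l else 0)
  have hcoord : ∀ m, Measurable fun p : (Fin d → Fin w) × ℝ => p.1 m := fun m =>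
    (measurable_pi_apply m).comp measurable_fst
  have hφ : Measurable φ :=
    (Measurable.ite (measurableSet_eq_fun (hcoord k) (hcoord i)) measurable_const
      measurable_const).mul
    (Measurable.ite (measurableSet_eq_fun (hcoord l) (hcoord i)) (measurable_snd.mul_const _)
      measurable_const)
  have hfactor : ∀ ω, collisionTerm H s x i k ω * collisionTerm H s x i l ω =
      s k ω * φ (fun m => H m ω, s l ω) := by
    intro ω
    simp only [collisionTerm, φ]
    split_ifs <;> ring
  have hind : IndepFun (s k) (fun ω => φ (fun m => H m ω, s l ω)) P :=
    (indepFun_sign_hashes_sign hindep hHmeas hsmeas hkl).comp measurable_id hφ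
  rw [integral_congr_ae (.of_forall hfactor), hind.integral_fun_mul_eq_mul_integral
    (hsmeas k).aestronglyMeasurable
    (hφ.comp ((measurable_pi_lambda _ hHmeas).prodMk (hsmeas l))).aestronglyMeasurable,
    integral_eq_zero_of_uniform_sign (hsmeas k) (hsval k) (hsunif k), zero_mul]

lemma integrable_bucketNoise_sq [IsFiniteMeasure P] (hHmeas : ∀ k, Measurable (H k))
    (hsmeas : ∀ k, Measurable (s k)) (hsval : ∀ k ω, s k ω = 1 ∨ s k ω = -1) :
    Integrable (fun ω => bucketNoise H s x i ω ^ 2) P := by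
  simp_rw [bucketNoise_sq_eq]
  exact integrable_finsetSum _ fun k _ => integrable_finsetSum _ fun l _ =>
    integrable_collisionTerm_mul hHmeas hsmeas hsval

lemma integral_bucketNoise_sq [IsProbabilityMeasure P]
    (hindep : iIndepFun (m := hashSignMS) (hashSignFamily H s) P)
    (hHmeas : ∀ k, Measurable (H k)) (hsmeas : ∀ k, Measurable (s k))
    (hsval : ∀ k ω, s k ω = 1 ∨ s k ω = -1)
    (hHunif : ∀ k (c : Fin w), P {ω | H k ω = c} = (w : ℝ≥0∞)⁻¹)
    (hsunif : ∀ k, P {ω | s k ω = 1} = 2⁻¹) :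
    ∫ ω, bucketNoise H s x i ω ^ 2 ∂P = ∑ k ∈ univ.erase i, x k ^ 2 / w := by
  simp_rw [bucketNoise_sq_eq]
  rw [integral_finsetSum _ fun k _ => integrable_finsetSum _ fun l _ =>
    integrable_collisionTerm_mul hHmeas hsmeas hsval]
  refine sum_congr rfl fun k hk => ?_
  rw [integral_finsetSum _ fun l _ => integrable_collisionTerm_mul hHmeas hsmeas hsval,
    sum_eq_single_of_mem k hk fun l _ hlk =>
      integral_collisionTerm_mul_of_ne hindep hHmeas hsmeas hsval hsunif hlk.symm]
  exact integral_collisionTerm_mul_self hindep hHmeas hsval hHunif (ne_of_mem_erase hk)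

end CountSketch

theorem countSketch_concentration_general {d w : ℕ}
    {Ω : Type*} [MeasurableSpace Ω] (P : Measure Ω) [IsProbabilityMeasure P]
    (x : Fin d → ℝ) (hx0 : x ≠ 0)
    (ε₁ : ℝ) (hε₁ : 0 < ε₁)
    (H : Fin d → Ω → Fin w) (hHmeas : ∀ k, Measurable (H k))
    (s : Fin d → Ω → ℝ) (hsmeas : ∀ k, Measurable (s k))
    (hsval : ∀ k ω, s k ω = 1 ∨ s k ω = -1)
    (hindep : iIndepFun (m := hashSignMS) (hashSignFamily H s) P)
    (hHunif : ∀ k (c : Fin w), P {ω | H k ω = c} = (w : ENNReal)⁻¹)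
    (hsunif : ∀ k, P {ω | s k ω = 1} = (2 : ENNReal)⁻¹)
    (est : Fin d → Ω → ℝ)
    (hest : ∀ i ω, est i ω =
      s i ω * ∑ k ∈ Finset.univ.filter (fun k => H k ω = H i ω), s k ω * x k)
    (i : Fin d) :
    P {ω | ε₁ * Real.sqrt (∑ k, (x k) ^ 2) ≤ |est i ω - x i|} ≤
      ENNReal.ofReal (1 / (ε₁ ^ 2 * w)) := by
  set S := ∑ k, x k ^ 2
  have hS : 0 < S := by
    obtain ⟨k, hk⟩ := Function.ne_iff.mp hx0
    exact sum_pos' (fun k _ => sq_nonneg (x k)) ⟨k, mem_univ k, pow_two_pos_of_ne_zero hk⟩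
  have hdev : ∀ ω, |est i ω - x i| = |bucketNoise H s x i ω| := fun ω => by
    rw [hest, sum_bucket_eq_add_bucketNoise, abs_sign_mul_add_sub (hsval i ω)]
  have hmoment : ∫ ω, bucketNoise H s x i ω ^ 2 ∂P ≤ S / w := by
    rw [integral_bucketNoise_sq hindep hHmeas hsmeas hsval hHunif hsunif, sum_div]
    exact sum_le_sum_of_subset_of_nonneg (erase_subset i univ) fun k _ _ => by positivity
  simp_rw [hdev]
  refine (meas_abs_ge_le_integral_sq_div_sq
    (integrable_bucketNoise_sq hHmeas hsmeas hsval) (mul_pos hε₁ (Real.sqrt_pos.mpr hS))).trans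
    (ENNReal.ofReal_le_ofReal ?_)
  calc (∫ ω, bucketNoise H s x i ω ^ 2 ∂P) / (ε₁ * √S) ^ 2 ≤ S / w / (ε₁ ^ 2 * S) := by
        rw [mul_pow, Real.sq_sqrt hS.le]
        gcongr
    _ = 1 / (ε₁ ^ 2 * w) := by
        rw [div_div, mul_comm (w : ℝ), mul_comm _ S, mul_assoc, div_mul_cancel_left₀ hS.ne',
          one_div]

/-- Chebyshev concentration for a Count-Sketch row estimator: the estimate deviates
from `x_i` by at least `ε₁‖x‖₂` with probability at most `1/(ε₁² w)`. -/
theorem countSketch_concentration {d w : ℕ} (hd : 0 < d) (hw : 0 < w)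
    {Ω : Type*} [MeasurableSpace Ω] (P : Measure Ω) [IsProbabilityMeasure P]
    (x : Fin d → ℝ) (hx0 : x ≠ 0)
    (ε₁ : ℝ) (hε₁ : 0 < ε₁)
    (H : Fin d → Ω → Fin w) (hHmeas : ∀ k, Measurable (H k))
    (s : Fin d → Ω → ℝ) (hsmeas : ∀ k, Measurable (s k))
    (hsval : ∀ k ω, s k ω = 1 ∨ s k ω = -1)
    (hindep : iIndepFun (m := hashSignMS) (hashSignFamily H s) P)
    (hHunif : ∀ k (c : Fin w), P {ω | H k ω = c} = (w : ENNReal)⁻¹)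
    (hsunif : ∀ k, P {ω | s k ω = 1} = (2 : ENNReal)⁻¹)
    (est : Fin d → Ω → ℝ)
    (hest : ∀ i ω, est i ω =
      s i ω * ∑ k ∈ Finset.univ.filter (fun k => H k ω = H i ω), s k ω * x k)
    (i : Fin d) :
    P {ω | ε₁ * Real.sqrt (∑ k, (x k) ^ 2) ≤ |est i ω - x i|} ≤
      ENNReal.ofReal (1 / (ε₁ ^ 2 * w)) :=
  countSketch_concentration_general P x hx0 ε₁ hε₁ H hHmeas s hsmeas hsval hindep hHunif hsunif est
    hest i
end
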